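/- Let F be a finite field of characteristic 2 with the setup of the real case, and suppose ε₁, ε₂ are units of R = F[x][t]/(t² + bt + c) with equal degree valuations |ε₁| = |ε₂| in F((1/x)). Then ε₁ = αε₂ for some α ∈ F*. -/

import Mathlib

/-!
Write ε = u + Δv and ε' = u + Δ'v with Δ' = b + Δ the conjugate root, so that
εε' = u² + buv + cv² is the norm of ε. For a unit of R the norm is a unit of F[x], a nonzero
constant, so |ε'| = |ε|⁻¹. If |ε₁| = |ε₂|, both ε₁ε₂' and ε₁'ε₂ have degree 0, hence so does
their sum; in characteristic 2 this sum is the polynomial b(u₁v₂ + u₂v₁), whose degree is at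
least deg b ≥ 1 unless u₁v₂ = u₂v₁. Under that relation ε₁ε₂' = u₁u₂ + bu₁v₂ + cv₁v₂ lies in
F[x] and squares to the unit N(ε₁)N(ε₂), and ε₁ = (ε₁ε₂' / N(ε₂)) ε₂.
-/

open Polynomial

/-- The image of a polynomial in F((1/x)): evaluate at x = X⁻¹, where the
variable x corresponds to the Laurent series `single (-1) 1` of degree 1
(so that the degree of a Laurent series is minus its order). -/
noncomputable def polyToLaurentInv (F : Type) [Field F] (p : Polynomial F) :
    LaurentSeries F :=
  Polynomial.aeval (HahnSeries.single (-1 : ℤ) (1 : F)) p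

namespace AdjoinRoot

variable {R : Type*} [CommRing R] {f : R[X]}

theorem exists_eq_of_add_root_mul_of (hf : IsMonicOfDegree f 2) (z : AdjoinRoot f) :
    ∃ p q : R, z = of f p + root f * of f q := by
  obtain ⟨g, rfl⟩ := mk_surjective z
  have hr : (g %ₘ f).natDegree < 2 :=
    hf.natDegree_eq ▸
      natDegree_modByMonic_lt g hf.monic (by rintro rfl; simpa using hf.natDegree_eq)
  rw [← mk_leftInverse hf.monic (mk f g), modByMonicHom_mk]
  generalize g %ₘ f = r at hr ⊢
  refine ⟨r.coeff 0, r.coeff 1, ?_⟩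
  conv_lhs => rw [eq_X_add_C_of_natDegree_le_one (Nat.le_of_lt_succ hr)]
  simp only [map_add, map_mul, mk_C, mk_X]
  ring

theorem eq_zero_of_of_add_root_mul_of_eq_zero (hf : IsMonicOfDegree f 2) {p q : R}
    (h : of f p + root f * of f q = 0) : p = 0 ∧ q = 0 := by
  have : Nontrivial R := not_subsingleton_iff_nontrivial.mp fun _ => by simp at hf
  have hpq : C q * X + C p = 0 := by
    by_contra hne
    refine mk_ne_zero_of_degree_lt hf.monic hne ?_ ?_
    · rw [degree_eq_natDegree hf.monic.ne_zero, hf.natDegree_eq]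
      exact degree_linear_lt
    · convert h using 1
      simp only [map_add, map_mul, mk_C, mk_X]
      ring
  exact ⟨by simpa using congrArg (coeff · 0) hpq, by simpa using congrArg (coeff · 1) hpq⟩

end AdjoinRoot

section QuadraticExtension

variable {R : Type*} [CommRing R] {b c : R}

theorem AdjoinRoot.of_add_root_mul_of_mul (u v p q : R) :
    (of (X ^ 2 + C b * X + C c) u + root _ * of _ v) * (of _ p + root _ * of _ q) =
      of _ (u * p - c * v * q) + root _ * of _ (u * q + v * p - b * v * q) := by
  have hroot := AdjoinRoot.eval₂_root (X ^ 2 + C b * X + C c)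
  simp only [eval₂_add, eval₂_mul, eval₂_pow, eval₂_X, eval₂_C] at hroot
  simp only [map_sub, map_add, map_mul]
  linear_combination (of _ v * of _ q) * hroot

theorem AdjoinRoot.isUnit_norm_of_isUnit [Nontrivial R] {u v : R}
    (h : IsUnit (of (X ^ 2 + C b * X + C c) u + root _ * of _ v)) :
    IsUnit (u ^ 2 - b * u * v + c * v ^ 2) := by
  have hf := isMonicOfDegree_add_add_two b c
  obtain ⟨w, hw⟩ := h.exists_right_inv
  obtain ⟨p, q, rfl⟩ := exists_eq_of_add_root_mul_of hf w
  rw [of_add_root_mul_of_mul] at hw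
  obtain ⟨h₁, h₀⟩ := eq_zero_of_of_add_root_mul_of_eq_zero hf (p := u * p - c * v * q - 1)
    (q := u * q + v * p - b * v * q) (by rw [map_sub, map_one, ← hw]; ring)
  refine IsUnit.of_mul_eq_one (p ^ 2 - b * p * q + c * q ^ 2) ?_
  linear_combination (u * p - c * v * q + 1) * h₁
    + (c * (u * q + v * p - b * v * q) - b * (u * p - c * v * q)) * h₀

theorem exists_unit_mul_eq_of_mul_eq_mul {u₁ v₁ u₂ v₂ : R}
    (hN₁ : IsUnit (u₁ ^ 2 - b * u₁ * v₁ + c * v₁ ^ 2))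
    (hN₂ : IsUnit (u₂ ^ 2 - b * u₂ * v₂ + c * v₂ ^ 2)) (h : u₁ * v₂ = u₂ * v₁) :
    ∃ w : Rˣ, u₁ = w * u₂ ∧ v₁ = w * v₂ := by
  -- `(u₁ + t v₁) * ((u₂ - b v₂) - t v₂) = U + t (u₂ v₁ - u₁ v₂)`, and `h` kills the `t`-part
  set U := u₁ * u₂ - b * u₁ * v₂ + c * v₁ * v₂
  have hU : IsUnit U := by
    have hsq : U ^ 2 =
        (u₁ ^ 2 - b * u₁ * v₁ + c * v₁ ^ 2) * (u₂ ^ 2 - b * u₂ * v₂ + c * v₂ ^ 2) := by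
      linear_combination (-(b * U - c * (u₂ * v₁ - u₁ * v₂))) * h
    exact (isUnit_pow_iff two_ne_zero).mp (hsq ▸ hN₁.mul hN₂)
  obtain ⟨n, hn⟩ := hN₂
  have hinv : (u₂ ^ 2 - b * u₂ * v₂ + c * v₂ ^ 2) * ↑n⁻¹ = 1 := by rw [← hn, Units.mul_inv]
  refine ⟨hU.unit * n⁻¹, ?_, ?_⟩ <;> simp only [Units.val_mul, IsUnit.unit_spec]
  · linear_combination (↑n⁻¹ * c * v₂) * h - u₁ * hinv
  · linear_combination (-(↑n⁻¹ * (u₂ - b * v₂))) * h - v₁ * hinv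

end QuadraticExtension

section RootOfQuadratic

variable {A : Type*} [CommRing A] {B C Δ : A}

theorem mul_conj_of_root (hΔ : Δ ^ 2 + B * Δ + C = 0) (x y : A) :
    (x + Δ * y) * (x + (-B - Δ) * y) = x ^ 2 - B * x * y + C * y ^ 2 := by
  linear_combination (-y ^ 2) * hΔ

theorem mul_conj_add_mul_conj_of_root (hΔ : Δ ^ 2 + B * Δ + C = 0) (x₁ y₁ x₂ y₂ : A) :
    (x₁ + Δ * y₁) * (x₂ + (-B - Δ) * y₂) + (x₂ + Δ * y₂) * (x₁ + (-B - Δ) * y₁) =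
      2 * x₁ * x₂ - B * (x₁ * y₂ + x₂ * y₁) + 2 * C * y₁ * y₂ := by
  linear_combination (-2 * y₁ * y₂) * hΔ

end RootOfQuadratic

theorem HahnSeries.order_mul_eq_zero_of_order_eq {Γ R : Type*} [AddCommMonoid Γ]
    [LinearOrder Γ] [IsOrderedCancelAddMonoid Γ] [Semiring R] [NoZeroDivisors R]
    {x y z : HahnSeries Γ R} {a : R} (ha : a ≠ 0) (hyz : y * z = C a) (hx : x ≠ 0)
    (h : x.order = y.order) :
    (x * z).order = 0 := by
  have hyz0 : y * z ≠ 0 := hyz ▸ C_ne_zero ha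
  rw [order_mul hx (right_ne_zero_of_mul hyz0), h, ← order_mul (left_ne_zero_of_mul hyz0)
    (right_ne_zero_of_mul hyz0), hyz, order_C]

theorem HahnSeries.order_add_nonneg {Γ R : Type*} [Zero Γ] [LinearOrder Γ] [AddMonoid R]
    {x y : HahnSeries Γ R} (hx : 0 ≤ x.order) (hy : 0 ≤ y.order) : 0 ≤ (x + y).order := by
  by_cases h : x + y = 0
  · simp [h]
  · exact (le_min hx hy).trans (min_order_le_order_add h)

section LaurentEmbedding

variable {F : Type} [Field F]

theorem polyToLaurentInv_C (a : F) : polyToLaurentInv F (C a) = HahnSeries.C a := by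
  simp [polyToLaurentInv, LaurentSeries.algebraMap_apply]

theorem coeff_polyToLaurentInv (p : F[X]) (n : ℕ) :
    (polyToLaurentInv F p).coeff (-n) = p.coeff n := by
  induction p using Polynomial.induction_on' with
  | add p q hp hq => simp_all [polyToLaurentInv]
  | monomial m a =>
    simp [polyToLaurentInv, HahnSeries.single_pow, LaurentSeries.algebraMap_apply,
      HahnSeries.coeff_single, coeff_monomial, eq_comm]

theorem natDegree_eq_zero_of_order_polyToLaurentInv_nonneg {p : F[X]}
    (h : 0 ≤ (polyToLaurentInv F p).order) : p.natDegree = 0 := by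
  by_contra hp
  have hp0 : p ≠ 0 := by rintro rfl; simp at hp
  have := HahnSeries.order_le_of_coeff_ne_zero (x := polyToLaurentInv F p) (g := -p.natDegree)
    (by rw [coeff_polyToLaurentInv]; exact leadingCoeff_ne_zero.mpr hp0)
  omega

end LaurentEmbedding

theorem mul_eq_mul_of_order_eq {F : Type} [Field F] [CharP F 2] {b c : F[X]}
    (hb : 1 ≤ b.natDegree) {Δ : LaurentSeries F}
    (hΔ : Δ ^ 2 + polyToLaurentInv F b * Δ + polyToLaurentInv F c = 0) {u₁ v₁ u₂ v₂ : F[X]}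
    (hN₁ : IsUnit (u₁ ^ 2 - b * u₁ * v₁ + c * v₁ ^ 2))
    (hN₂ : IsUnit (u₂ ^ 2 - b * u₂ * v₂ + c * v₂ ^ 2))
    (hord : (polyToLaurentInv F u₁ + Δ * polyToLaurentInv F v₁).order
      = (polyToLaurentInv F u₂ + Δ * polyToLaurentInv F v₂).order) :
    u₁ * v₂ = u₂ * v₁ := by
  set ι := polyToLaurentInv F
  have hnorm : ∀ {u v : F[X]}, IsUnit (u ^ 2 - b * u * v + c * v ^ 2) →
      ∃ a ≠ 0, (ι u + Δ * ι v) * (ι u + (-ι b - Δ) * ι v) = HahnSeries.C a := by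
    intro u v hN
    obtain ⟨a, ha, hCa⟩ := isUnit_iff.mp hN
    refine ⟨a, ha.ne_zero, ?_⟩
    rw [mul_conj_of_root hΔ, ← polyToLaurentInv_C, hCa]
    simp [ι, polyToLaurentInv]
  obtain ⟨a₁, ha₁, h₁⟩ := hnorm hN₁
  obtain ⟨a₂, ha₂, h₂⟩ := hnorm hN₂
  have h₁₂ := HahnSeries.order_mul_eq_zero_of_order_eq ha₂ h₂
    (left_ne_zero_of_mul (h₁ ▸ HahnSeries.C_ne_zero ha₁)) hord
  have h₂₁ := HahnSeries.order_mul_eq_zero_of_order_eq ha₁ h₁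
    (left_ne_zero_of_mul (h₂ ▸ HahnSeries.C_ne_zero ha₂)) hord.symm
  have htrace : 2 * u₁ * u₂ - b * (u₁ * v₂ + u₂ * v₁) + 2 * c * v₁ * v₂
      = b * (u₁ * v₂ + u₂ * v₁) := by
    linear_combination
      (u₁ * u₂ - b * (u₁ * v₂ + u₂ * v₁) + c * v₁ * v₂) * CharTwo.two_eq_zero (R := F[X])
  have hsum : _ = ι (b * (u₁ * v₂ + u₂ * v₁)) :=
    (mul_conj_add_mul_conj_of_root hΔ (ι u₁) (ι v₁) (ι u₂) (ι v₂)).trans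
      (by rw [← htrace]; simp [ι, polyToLaurentInv, map_ofNat])
  have hdeg := natDegree_eq_zero_of_order_polyToLaurentInv_nonneg
    (hsum ▸ HahnSeries.order_add_nonneg h₁₂.ge h₂₁.ge)
  have hb0 : b ≠ 0 := by rintro rfl; simp at hb
  refine CharTwo.add_eq_zero.mp (by_contra fun hW => ?_)
  rw [natDegree_mul hb0 hW] at hdeg
  omega

theorem units_of_equal_valuation_proportional_general
    (F : Type) [Field F] [CharP F 2] (b c : Polynomial F)
    (hb : 1 ≤ b.natDegree)
    (Δ₀ : LaurentSeries F)
    (hΔ : Δ₀ ^ 2 + polyToLaurentInv F b * Δ₀ + polyToLaurentInv F c = 0) :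
    ∀ (f : Polynomial (Polynomial F)), f = X ^ 2 + C b * X + C c →
    ∀ u₁ v₁ u₂ v₂ : Polynomial F,
      IsUnit (AdjoinRoot.of f u₁ + AdjoinRoot.root f * AdjoinRoot.of f v₁) →
      IsUnit (AdjoinRoot.of f u₂ + AdjoinRoot.root f * AdjoinRoot.of f v₂) →
      (polyToLaurentInv F u₁ + Δ₀ * polyToLaurentInv F v₁).order
        = (polyToLaurentInv F u₂ + Δ₀ * polyToLaurentInv F v₂).order →
      ∃ a : F, a ≠ 0 ∧ u₁ = C a * u₂ ∧ v₁ = C a * v₂ := by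
  rintro f rfl u₁ v₁ u₂ v₂ h₁ h₂ hord
  have hN₁ := AdjoinRoot.isUnit_norm_of_isUnit h₁
  have hN₂ := AdjoinRoot.isUnit_norm_of_isUnit h₂
  obtain ⟨w, hu, hv⟩ :=
    exists_unit_mul_eq_of_mul_eq_mul hN₁ hN₂ (mul_eq_mul_of_order_eq hb hΔ hN₁ hN₂ hord)
  obtain ⟨a, ha, hCa⟩ := isUnit_iff.mp w.isUnit
  exact ⟨a, ha.ne_zero, hCa ▸ hu, hCa ▸ hv⟩

/-- Real case: two units ε₁ = u₁ + Δv₁, ε₂ = u₂ + Δv₂ of R with equal degree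
valuations in F((1/x)) agree up to a constant: ε₁ = α ε₂ with α ∈ F*. -/
theorem units_of_equal_valuation_proportional
    (F : Type) [Field F] [Fintype F] [CharP F 2] (b c : Polynomial F)
    (hb : 1 ≤ b.natDegree) (hc : c ≠ 0) (hdeg : c.natDegree < 2 * b.natDegree)
    (hnoroot : ∀ ρ : RatFunc F,
      ρ ^ 2 + algebraMap (Polynomial F) (RatFunc F) b * ρ
        + algebraMap (Polynomial F) (RatFunc F) c ≠ 0)
    (Δ₀ : LaurentSeries F)
    (hΔ : Δ₀ ^ 2 + polyToLaurentInv F b * Δ₀ + polyToLaurentInv F c = 0)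
    (hΔpos : Δ₀.order < 0) :
    ∀ (f : Polynomial (Polynomial F)), f = X ^ 2 + C b * X + C c →
    ∀ u₁ v₁ u₂ v₂ : Polynomial F,
      IsUnit (AdjoinRoot.of f u₁ + AdjoinRoot.root f * AdjoinRoot.of f v₁) →
      IsUnit (AdjoinRoot.of f u₂ + AdjoinRoot.root f * AdjoinRoot.of f v₂) →
      (polyToLaurentInv F u₁ + Δ₀ * polyToLaurentInv F v₁).order
        = (polyToLaurentInv F u₂ + Δ₀ * polyToLaurentInv F v₂).order →
      ∃ a : F, a ≠ 0 ∧ u₁ = C a * u₂ ∧ v₁ = C a * v₂ :=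
  units_of_equal_valuation_proportional_general F b c hb Δ₀ hΔ
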